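/- arXiv:2507.16765 — 6 statements merged into one kernel-verified Lean document; each statement's English description precedes it below -/
import Mathlib

section
/- The formal power series u(x) = (1 + 3x - sqrt(1 + 6x + 9x^2 - 4x^3 - 8x^4))/(2x^2) is the compositional inverse of the power series 2x/(1 - 3x + sqrt(1 + 2x + 9x^2 + 4x^3)); that is, substituting one into the other yields x. -/
open PowerSeries

/-!
Squaring away `t` in `2x²u = 1 + 3x - t` shows that `u` satisfies the quadratic
`u = x(1 + 2x + xu² - 3u)`, so `u(0) = 0`. Solving the desired identity `2u = x(1 - 3u + σ)`
for `σ` and using the quadratic to divide by `x` suggests `σ = s := 1 + 4x + 2xu² - 3u`.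
Indeed `s² - (1 + 2u + 9u² + 4u³)` is `-4(2 + u²)` times the quadratic, hence vanishes,
and `s(0) = 1 = σ(0)` singles out `s` among the two square roots.
-/

namespace PowerSeries

variable {R : Type*} [CommRing R]

lemma sq_eq_of_eq_X_mul {u : R⟦X⟧} (hu : u = X * (1 + 2 * X + X * u ^ 2 - 3 * u)) :
    (1 + 4 * X + 2 * X * u ^ 2 - 3 * u) ^ 2 = 1 + 2 * u + 9 * u ^ 2 + 4 * u ^ 3 := by
  linear_combination -4 * (2 + u ^ 2) * hu

variable [IsDomain R] [NeZero (2 : R)]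

lemma eq_of_sq_eq_sq_of_constantCoeff_eq {a b : R⟦X⟧} (h : a ^ 2 = b ^ 2)
    (hab : constantCoeff a = constantCoeff b) (hb : constantCoeff b ≠ 0) : a = b := by
  refine (sq_eq_sq_iff_eq_or_eq_neg.mp h).resolve_right fun hneg ↦ hb ?_
  have hneg0 := congrArg constantCoeff hneg
  rw [map_neg] at hneg0
  have h2 : 2 * constantCoeff b = 0 := by linear_combination hneg0 - hab
  exact (mul_eq_zero.mp h2).resolve_left two_ne_zero

lemma eq_X_mul_of_two_mul_X_sq_mul_eq {t u : R⟦X⟧}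
    (ht : t ^ 2 = 1 + 6 * X + 9 * X ^ 2 - 4 * X ^ 3 - 8 * X ^ 4)
    (hu : 2 * X ^ 2 * u = 1 + 3 * X - t) :
    u = X * (1 + 2 * X + X * u ^ 2 - 3 * u) := by
  have h2 : (2 : R⟦X⟧) ≠ 0 := fun h ↦
    two_ne_zero (α := R) (by simpa [map_ofNat] using congrArg constantCoeff h)
  have h : 2 * (2 * (X ^ 2 * (u - X * (1 + 2 * X + X * u ^ 2 - 3 * u)))) = 0 := by
    linear_combination -ht + (t + 1 + 3 * X - 2 * X ^ 2 * u) * hu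
  simpa [sub_eq_zero, h2, X_ne_zero] using h

end PowerSeries

theorem reversion_of_elliptic_series_general (t u σ : PowerSeries ℚ)
    (ht : t ^ 2 = 1 + 6 * X + 9 * X ^ 2 - 4 * X ^ 3 - 8 * X ^ 4)
    (hu : 2 * X ^ 2 * u = 1 + 3 * X - t)
    (hσ : σ ^ 2 = 1 + 2 * u + 9 * u ^ 2 + 4 * u ^ 3)
    (hσ0 : constantCoeff σ = 1) :
    2 * u * (1 - 3 * u + σ)⁻¹ = X := by
  have hquad := eq_X_mul_of_two_mul_X_sq_mul_eq ht hu
  have hu0 : constantCoeff u = 0 := by rw [hquad]; simp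
  have hσs : σ = 1 + 4 * X + 2 * X * u ^ 2 - 3 * u :=
    eq_of_sq_eq_sq_of_constantCoeff_eq (hσ.trans (sq_eq_of_eq_X_mul hquad).symm)
      (by simp [hσ0, hu0]) (by simp [hu0])
  have hden : constantCoeff (1 - 3 * u + σ) ≠ 0 := by simp [hu0, hσ0]
  rw [eq_comm, eq_mul_inv_iff_mul_eq hden]
  linear_combination X * hσs - 2 * hquad

/-- The formal power series `u(x) = (1 + 3x - sqrt(1 + 6x + 9x² - 4x³ - 8x⁴))/(2x²)` is the
compositional inverse of `F(x) = 2x/(1 - 3x + sqrt(1 + 2x + 9x² + 4x³))`, i.e. `F(u(x)) = x`.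

Here `t` is the formal square root (constant term `1`) of the quartic, so `u` is
characterized by `2x²·u = 1 + 3x - t`; and `σ` is the formal square root (constant term `1`)
of `1 + 2u + 9u² + 4u³`, so that `F(u(x)) = 2u/(1 - 3u + σ)`.  The conclusion
`2u·(1 - 3u + σ)⁻¹ = x` says precisely that this composition is `x`. -/
theorem reversion_of_elliptic_series (t u σ : PowerSeries ℚ)
    (ht : t ^ 2 = 1 + 6 * X + 9 * X ^ 2 - 4 * X ^ 3 - 8 * X ^ 4)
    (ht0 : constantCoeff t = 1)
    (hu : 2 * X ^ 2 * u = 1 + 3 * X - t)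
    (hσ : σ ^ 2 = 1 + 2 * u + 9 * u ^ 2 + 4 * u ^ 3)
    (hσ0 : constantCoeff σ = 1) :
    2 * u * (1 - 3 * u + σ)⁻¹ = X :=
  reversion_of_elliptic_series_general t u σ ht hu hσ hσ0
end

section
/- The power series g(x) = (1 + 3x - sqrt(1 + 6x + 9x^2 - 4x^3 - 8x^4))/(2x^3) satisfies g(x) = ((1+2x)/(1+3x))·C(x^3(1+2x)/(1+3x)^2), where C is the Catalan generating function. -/
open PowerSeries

/-!
The quartic under the square root is `(1 + 3x)² - 4x³(1 + 2x)`, so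
`(1 + 3x)·sqrt(1 - 4A)` with `A = x³(1 + 2x)/(1 + 3x)²` is a square root of it with constant
term `1`; as such square roots are unique, `sqrt(1 + 6x + 9x² - 4x³ - 8x⁴) = (1 + 3x)·sqrt(1 - 4A)`.
Substituting this into `2A·C(A) = 1 - sqrt(1 - 4A)` and clearing the denominator `(1 + 3x)²`
gives `2x³(1 + 2x)·C(A) = (1 + 3x)·2x³·g`.
-/

namespace PowerSeries

theorem eq_of_sq_eq_sq_of_constantCoeff_eq_s3 {R : Type*} [CommRing R] [NoZeroDivisors R]
    [NeZero (2 : R)] {a b : R⟦X⟧} (hab : a ^ 2 = b ^ 2)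
    (hc : constantCoeff a = constantCoeff b) (hc0 : constantCoeff a ≠ 0) : a = b := by
  refine (sq_eq_sq_iff_eq_or_eq_neg.mp hab).resolve_right fun hneg => hc0 ?_
  have hcb := congrArg constantCoeff hneg
  rw [map_neg, hc] at hcb
  have h2 : 2 * constantCoeff a = 0 := by linear_combination hcb + 2 * hc
  exact (mul_eq_zero.mp h2).resolve_left two_ne_zero

section Field

variable {K : Type*} [Field K] {u P s t w : K⟦X⟧}

theorem mul_eq_of_sq_eq_one_sub_div_sq [NeZero (2 : K)] (hu : constantCoeff u ≠ 0)
    (hs : s ^ 2 = 1 - 4 * (P * (u ^ 2)⁻¹)) (hs0 : constantCoeff s = 1)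
    (ht : t ^ 2 = u ^ 2 - 4 * P) (ht0 : constantCoeff t = constantCoeff u) :
    s * u = t := by
  have hinv : (u ^ 2)⁻¹ * u ^ 2 = 1 := PowerSeries.inv_mul_cancel _ (by simpa using hu)
  refine eq_of_sq_eq_sq_of_constantCoeff_eq_s3 ?_ (by simp [hs0, ht0]) (by simpa [hs0] using hu)
  linear_combination u ^ 2 * hs - 4 * P * hinv - ht

theorem mul_mul_eq_of_mul_div_sq_eq_one_sub (hu : constantCoeff u ≠ 0)
    (hw : 2 * (P * (u ^ 2)⁻¹) * w = 1 - s) (hsu : s * u = t) :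
    2 * P * w = u * (u - t) := by
  have hinv : (u ^ 2)⁻¹ * u ^ 2 = 1 := PowerSeries.inv_mul_cancel _ (by simpa using hu)
  linear_combination u ^ 2 * hw - 2 * P * w * hinv - u * hsu

end Field

end PowerSeries

/-- The power series `g(x) = (1 + 3x - sqrt(1 + 6x + 9x² - 4x³ - 8x⁴))/(2x³)` satisfies
`g(x) = ((1+2x)/(1+3x)) · C(x³(1+2x)/(1+3x)²)`, where `C` is the Catalan generating function.

Here `t` is the formal square root (constant term `1`) of the quartic, so `g` is
characterized by `2x³·g = 1 + 3x - t`.  With `A = x³(1+2x)/(1+3x)²`, the series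
`w = C(A)` is characterized by `2A·w = 1 - sA` where `sA` is the formal square root
(constant term `1`) of `1 - 4A`. -/
theorem g_eq_catalan_form (t g sA w : PowerSeries ℚ)
    (ht : t ^ 2 = 1 + 6 * X + 9 * X ^ 2 - 4 * X ^ 3 - 8 * X ^ 4)
    (ht0 : constantCoeff t = 1)
    (hg : 2 * X ^ 3 * g = 1 + 3 * X - t)
    (hsA : sA ^ 2 = 1 - 4 * (X ^ 3 * (1 + 2 * X) * ((1 + 3 * X) ^ 2)⁻¹))
    (hsA0 : constantCoeff sA = 1)
    (hw : 2 * (X ^ 3 * (1 + 2 * X) * ((1 + 3 * X) ^ 2)⁻¹) * w = 1 - sA) :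
    g = (1 + 2 * X) * (1 + 3 * X)⁻¹ * w := by
  have hu : constantCoeff (1 + 3 * X : ℚ⟦X⟧) ≠ 0 := by simp
  have hsAt : sA * (1 + 3 * X) = t :=
    mul_eq_of_sq_eq_one_sub_div_sq hu hsA hsA0 (by linear_combination ht) (by simp [ht0])
  have hcleared := mul_mul_eq_of_mul_div_sq_eq_one_sub hu hw hsAt
  have hX : (2 * X ^ 3 : ℚ⟦X⟧) ≠ 0 :=
    mul_ne_zero (fun h => by simpa [map_ofNat] using congrArg constantCoeff h)
      (pow_ne_zero 3 X_ne_zero)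
  have hgw : g * (1 + 3 * X) = (1 + 2 * X) * w :=
    mul_left_cancel₀ hX (by linear_combination (1 + 3 * X) * hg - hcleared)
  rw [mul_right_comm, eq_mul_inv_iff_mul_eq hu, hgw]
end

section
/- If a sequence b is a binomial transform of a sequence a, i.e., b_n = Σ_{k=0}^n binom(n,k) a_k, then for every n the Hankel determinants agree: det(b_{i+j})_{0≤i,j≤n} = det(a_{i+j})_{0≤i,j≤n}. -/
/-!
Let `L` be the linear functional on `R[X]` with `L (X ^ k) = a k`. Then `b m = L ((X + 1) ^ m)`,
so the Hankel matrices of `a` and `b` are the Gram matrices `L (p i * p j)` of the bases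
`p i = X ^ i` and `p i = (X + 1) ^ i` of the polynomials of degree `≤ n`. The change of basis
between them is unitriangular, hence the two Gram matrices have the same determinant.
-/

open Finset Matrix Polynomial

namespace Polynomial

variable {R : Type*} [CommRing R]

def momentFunctional (a : ℕ → R) : R[X] →ₗ[R] R :=
  lsum fun k => LinearMap.toSpanSingleton R R (a k)

@[simp]
theorem momentFunctional_X_pow (a : ℕ → R) (k : ℕ) : momentFunctional a (X ^ k) = a k := by
  simp [momentFunctional, ← monomial_one_right_eq_X_pow]

theorem momentFunctional_X_add_one_pow (a : ℕ → R) (n : ℕ) :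
    momentFunctional a ((X + 1) ^ n) = ∑ k ∈ range (n + 1), (n.choose k : R) * a k := by
  simp only [add_pow, one_pow, mul_one, map_sum]
  refine sum_congr rfl fun k _ => ?_
  rw [mul_comm, ← nsmul_eq_mul, map_nsmul, momentFunctional_X_pow, nsmul_eq_mul]

theorem natDegree_X_add_one_pow_le (n : ℕ) : ((X + 1 : R[X]) ^ n).natDegree ≤ n :=
  natDegree_le_iff_coeff_eq_zero.mpr fun k hk => by
    rw [coeff_X_add_one_pow, Nat.choose_eq_zero_of_lt (by exact_mod_cast hk), Nat.cast_zero]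

theorem eq_sum_fin_C_mul_X_pow {n : ℕ} (p : R[X]) (hp : p.natDegree < n) :
    p = ∑ k : Fin n, C (p.coeff k) * X ^ (k : ℕ) :=
  (p.as_sum_range_C_mul_X_pow' hp).trans
    (Fin.sum_univ_eq_sum_range (fun k => C (p.coeff k) * X ^ k) n).symm

theorem of_linearMap_mul_eq {n : ℕ} {ι : Type*} (L : R[X] →ₗ[R] R) (p : ι → R[X])
    (hp : ∀ i, (p i).natDegree < n) :
    (of fun i j => L (p i * p j)) =
      (of fun i (k : Fin n) => (p i).coeff k) * (of fun k l : Fin n => L (X ^ (k + l : ℕ))) *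
        (of fun i (k : Fin n) => (p i).coeff k)ᵀ := by
  ext i j
  have hexpand : p i * p j = ∑ k : Fin n, ∑ l : Fin n,
      ((p i).coeff k * (p j).coeff l) • X ^ (k + l : ℕ) := by
    conv_lhs => rw [eq_sum_fin_C_mul_X_pow (p i) (hp i), eq_sum_fin_C_mul_X_pow (p j) (hp j)]
    simp only [sum_mul_sum, smul_eq_C_mul, C_mul, pow_add]
    exact sum_congr rfl fun _ _ => sum_congr rfl fun _ _ => by ring
  simp only [of_apply, hexpand, map_sum, map_smul, smul_eq_mul, mul_apply, transpose_apply,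
    sum_mul]
  rw [sum_comm]
  exact sum_congr rfl fun _ _ => sum_congr rfl fun _ _ => by ring

theorem det_of_linearMap_mul_eq_det_of_linearMap_X_pow {n : ℕ} (L : R[X] →ₗ[R] R)
    (p : Fin n → R[X]) (hdeg : ∀ i, (p i).natDegree ≤ i)
    (hlead : ∀ i : Fin n, (p i).coeff i = 1) :
    det (of fun i j => L (p i * p j)) = det (of fun i j : Fin n => L (X ^ (i + j : ℕ))) := by
  have hunitriangular : det (of fun i (k : Fin n) => (p i).coeff k) = 1 := by
    rw [det_of_isLowerTriangular (of fun i (k : Fin n) => (p i).coeff k) fun i k hik =>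
      coeff_eq_zero_of_natDegree_lt ((hdeg i).trans_lt (OrderDual.toDual_lt_toDual.mp hik))]
    simp [hlead]
  rw [of_linearMap_mul_eq L p fun i => (hdeg i).trans_lt i.isLt, det_mul, det_mul, det_transpose,
    hunitriangular, one_mul, mul_one]

end Polynomial

/-- If `b` is the binomial transform of `a`, i.e. `b n = Σ_{k=0}^n (n choose k) a k`, then all
Hankel determinants agree: `det (b (i+j)) = det (a (i+j))` for the `(n+1)×(n+1)` Hankel
matrices, for every `n`. -/
theorem hankel_det_binomial_transform (a b : ℕ → ℤ)
    (hb : ∀ n : ℕ, b n = ∑ k ∈ Finset.range (n + 1), (n.choose k : ℤ) * a k) :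
    ∀ n : ℕ,
      Matrix.det (Matrix.of fun i j : Fin (n + 1) => b (i.val + j.val)) =
        Matrix.det (Matrix.of fun i j : Fin (n + 1) => a (i.val + j.val)) := by
  intro n
  have hb_moment : ∀ m, b m = momentFunctional a ((X + 1) ^ m) := fun m => by
    rw [hb, momentFunctional_X_add_one_pow]
  have := det_of_linearMap_mul_eq_det_of_linearMap_X_pow (momentFunctional a)
    (fun i : Fin (n + 1) => (X + 1) ^ (i : ℕ)) (fun i => natDegree_X_add_one_pow_le i)
    (fun i => by simp [coeff_X_add_one_pow])
  simpa only [← pow_add, ← hb_moment, momentFunctional_X_pow] using this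
end

section
/- The unique formal power series u with u(0) = 0 satisfying u/x = 1 - 4u + 2ux + u^2·x equals x·g_1(x), where g_1(x) = (1/(1 + 4x - 2x^2))·C(x^3/(1 + 4x - 2x^2)^2). -/
open PowerSeries

/-!
Clearing the denominator, the functional equation for `u` reads `u·q = x + x²u²` with
`q = 1 + 4x - 2x²`, and this quadratic has at most one power-series solution because
`q(0) ≠ 0`. On the other side, the square-root description of `w = C(A)` yields the Catalan
equation `A w² = w - 1`, and with `A = x³/q²` it says exactly that `x·q⁻¹·w` solves the same
quadratic.
-/

theorem mul_sq_eq_sub_one_of_two_mul_mul_eq_one_sub {R : Type*} [CommRing R] [NoZeroDivisors R]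
    {A s w : R} (hA : A ≠ 0) (h2 : (2 : R) ≠ 0) (hs : s ^ 2 = 1 - 4 * A)
    (hw : 2 * A * w = 1 - s) : A * w ^ 2 = w - 1 := by
  have h : (2 * 2 * A) * (A * w ^ 2 - w + 1) = 0 := by
    linear_combination (2 * A * w - 1 - s) * hw + hs
  have h4A : 2 * 2 * A ≠ 0 := mul_ne_zero (mul_ne_zero h2 h2) hA
  linear_combination (mul_eq_zero.mp h).resolve_left h4A

namespace PowerSeries

theorem eq_of_mul_eq_add_mul_sq {R : Type*} [CommRing R] [NoZeroDivisors R]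
    {q a f u v : R⟦X⟧} (hq : constantCoeff q ≠ 0) (hf : constantCoeff f = 0)
    (hu : u * q = a + f * u ^ 2) (hv : v * q = a + f * v ^ 2) : u = v := by
  have hfactor : (u - v) * (q - f * (u + v)) = 0 := by linear_combination hu - hv
  have hne : q - f * (u + v) ≠ 0 := fun h ↦ hq <| by
    simpa [hf] using congrArg constantCoeff h
  exact sub_eq_zero.mp ((mul_eq_zero.mp hfactor).resolve_right hne)

theorem inv_sq {k : Type*} [Field k] (φ : k⟦X⟧) : (φ ^ 2)⁻¹ = φ⁻¹ ^ 2 := by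
  rw [sq, PowerSeries.mul_inv_rev, sq]

end PowerSeries

theorem u_eq_x_mul_g1_general (u sA w g1 : PowerSeries ℚ)
    (hu : u = X * (1 - 4 * u + 2 * u * X + u ^ 2 * X))
    (hsA : sA ^ 2 = 1 - 4 * (X ^ 3 * ((1 + 4 * X - 2 * X ^ 2) ^ 2)⁻¹))
    (hw : 2 * (X ^ 3 * ((1 + 4 * X - 2 * X ^ 2) ^ 2)⁻¹) * w = 1 - sA)
    (hg1 : g1 = (1 + 4 * X - 2 * X ^ 2)⁻¹ * w) :
    u = X * g1 := by
  set q : ℚ⟦X⟧ := 1 + 4 * X - 2 * X ^ 2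
  have hq : constantCoeff q ≠ 0 := by simp [q]
  have hA : X ^ 3 * (q ^ 2)⁻¹ ≠ 0 :=
    mul_ne_zero (pow_ne_zero 3 X_ne_zero) (by simpa [PowerSeries.inv_eq_zero] using hq)
  have h2 : (2 : ℚ⟦X⟧) ≠ 0 := fun h ↦ by simpa [map_ofNat] using congrArg constantCoeff h
  have hcat : X ^ 3 * (q ^ 2)⁻¹ * w ^ 2 = w - 1 :=
    mul_sq_eq_sub_one_of_two_mul_mul_eq_one_sub hA h2 hsA hw
  refine eq_of_mul_eq_add_mul_sq hq (a := X) (f := X ^ 2) (by simp) (by linear_combination hu) ?_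
  rw [hg1]
  rw [inv_sq] at hcat
  linear_combination X * w * PowerSeries.inv_mul_cancel q hq - X * hcat

/-- The unique formal power series `u` with `u(0) = 0` satisfying
`u/x = 1 - 4u + 2ux + u²x` equals `x·g₁(x)`, where
`g₁(x) = (1/(1+4x-2x²))·C(x³/(1+4x-2x²)²)`.

Here `w = C(A)` with `A = x³/(1+4x-2x²)²` is characterized by `2A·w = 1 - sA`, where
`sA` is the formal square root of `1 - 4A` with constant term `1`, and
`g₁ = (1+4x-2x²)⁻¹ · w`. -/
theorem u_eq_x_mul_g1 (u sA w g1 : PowerSeries ℚ)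
    (hu0 : constantCoeff u = 0)
    (hu : u = X * (1 - 4 * u + 2 * u * X + u ^ 2 * X))
    (hsA : sA ^ 2 = 1 - 4 * (X ^ 3 * ((1 + 4 * X - 2 * X ^ 2) ^ 2)⁻¹))
    (hsA0 : constantCoeff sA = 1)
    (hw : 2 * (X ^ 3 * ((1 + 4 * X - 2 * X ^ 2) ^ 2)⁻¹) * w = 1 - sA)
    (hg1 : g1 = (1 + 4 * X - 2 * X ^ 2)⁻¹ * w) :
    u = X * g1 :=
  u_eq_x_mul_g1_general u sA w g1 hu hsA hw hg1
end

section
/- Let α, β, γ, δ be elements of a field of characteristic 0. The unique formal power series u with u(0)=0 satisfying u/x = 1 + γx + αu + βux + δu^2·x is given by u = (1 - αx - βx^2 - sqrt(1 - 2αx + (α^2-2β)x^2 + 2(αβ-2δ)x^3 + (β^2-4γδ)x^4))/(2δx^2), provided δ ≠ 0. -/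
open PowerSeries

/-! Completing the square in the functional equation shows that
`T = 1 - αx - βx² - 2δx²u` squares to the quartic under the root, so `T = ±s`;
both `T` and `s` have constant term `1`, which rules out `T = -s` in characteristic `≠ 2`. -/

theorem PowerSeries.eq_of_sq_eq_of_constantCoeff_eq {R : Type*} [CommRing R] [IsDomain R]
    [NeZero (2 : R)] {a b : PowerSeries R} (h : a ^ 2 = b ^ 2)
    (h0 : constantCoeff a = constantCoeff b) (hb : constantCoeff b ≠ 0) : a = b := by
  refine (sq_eq_sq_iff_eq_or_eq_neg.mp h).resolve_right fun hneg => hb ?_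
  have h2b : 2 * constantCoeff b = 0 := by
    rw [two_mul]
    nth_rewrite 1 [← h0]
    rw [hneg, map_neg, neg_add_cancel]
  exact (mul_eq_zero.mp h2b).resolve_left two_ne_zero

theorem sq_completed_of_eq_X_mul {R : Type*} [CommRing R] (α β γ δ : R) {u : PowerSeries R}
    (hu : u = X * (1 + C γ * X + C α * u + C β * u * X + C δ * u ^ 2 * X)) :
    (1 - C α * X - C β * X ^ 2 - 2 * C δ * X ^ 2 * u) ^ 2 = 1 - 2 * C α * X
      + C (α ^ 2 - 2 * β) * X ^ 2 + 2 * C (α * β - 2 * δ) * X ^ 3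
      + C (β ^ 2 - 4 * γ * δ) * X ^ 4 := by
  simp only [map_sub, map_mul, map_pow, map_ofNat]
  linear_combination (-4 * C δ * X ^ 2) * hu

theorem u_closed_form_general {K : Type*} [Field K] [CharZero K] (α β γ δ : K)
    (u s : PowerSeries K)
    (hu0 : constantCoeff u = 0)
    (hu : u = X * (1 + C γ * X + C α * u + C β * u * X + C δ * u ^ 2 * X))
    (hs : s ^ 2 = 1 - 2 * C α * X + C (α ^ 2 - 2 * β) * X ^ 2
      + 2 * C (α * β - 2 * δ) * X ^ 3 + C (β ^ 2 - 4 * γ * δ) * X ^ 4)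
    (hs0 : constantCoeff s = 1) :
    2 * C δ * X ^ 2 * u = 1 - C α * X - C β * X ^ 2 - s := by
  have hT : 1 - C α * X - C β * X ^ 2 - 2 * C δ * X ^ 2 * u = s := by
    refine eq_of_sq_eq_of_constantCoeff_eq ((sq_completed_of_eq_X_mul α β γ δ hu).trans hs.symm)
      ?_ (by simp [hs0])
    simp [hu0, hs0]
  linear_combination -hT

/-- Let `α, β, γ, δ` be elements of a field of characteristic `0` with `δ ≠ 0`.  The unique
formal power series `u` with `u(0) = 0` satisfying `u/x = 1 + γx + αu + βux + δu²x` is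
`u = (1 - αx - βx² - sqrt(1 - 2αx + (α²-2β)x² + 2(αβ-2δ)x³ + (β²-4γδ)x⁴))/(2δx²)`,
where the square root `s` is the formal one with constant term `1`; i.e.
`2δx²·u = 1 - αx - βx² - s`. -/
theorem u_closed_form {K : Type*} [Field K] [CharZero K] (α β γ δ : K) (hδ : δ ≠ 0)
    (u s : PowerSeries K)
    (hu0 : constantCoeff u = 0)
    (hu : u = X * (1 + C γ * X + C α * u + C β * u * X + C δ * u ^ 2 * X))
    (hs : s ^ 2 = 1 - 2 * C α * X + C (α ^ 2 - 2 * β) * X ^ 2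
      + 2 * C (α * β - 2 * δ) * X ^ 3 + C (β ^ 2 - 4 * γ * δ) * X ^ 4)
    (hs0 : constantCoeff s = 1) :
    2 * C δ * X ^ 2 * u = 1 - C α * X - C β * X ^ 2 - s :=
  u_closed_form_general α β γ δ u s hu0 hu hs hs0
end

section
/- Let M be the lower triangular matrix (the Riordan array (γ(x), xγ(x))) associated to the elliptic curve y^2 - 3xy - y = x^3 - 2x^2 - 2x, i.e., with (a,b,c) = (3,2,2), so that a-2c = -1 and ac-b-c^2 = 0 and γ(x) = (1/(1+x))·C(-x^3/(1+x)^2). Then the Riordan array (γ(x), -xγ(x)) is a pseudo-involution: its square is the identity matrix. -/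
open PowerSeries

namespace RiordanAux

open Finset

/-- Truncated composition: substitute `f` into the polynomial `trunc (n+2) P`. -/
noncomputable def Cp (n : ℕ) (f P : PowerSeries ℚ) : PowerSeries ℚ :=
  Polynomial.eval₂ ((PowerSeries.C (R := ℚ))) f (trunc (n + 2) P)

lemma Cp_sum (n : ℕ) (f P : PowerSeries ℚ) :
    Cp n f P = ∑ i ∈ range (n + 2), (PowerSeries.C (R := ℚ)) (coeff i P) * f ^ i := by
  rw [Cp, eval₂_trunc_eq_sum_range]

lemma Cp_one (n : ℕ) (f : PowerSeries ℚ) : Cp n f 1 = 1 := by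
  rw [Cp, show n + 2 = (n + 1) + 1 from rfl, trunc_one, Polynomial.eval₂_one]

lemma Cp_X (n : ℕ) (f : PowerSeries ℚ) : Cp n f X = f := by
  rw [Cp, trunc_X, Polynomial.eval₂_X]

lemma Cp_add (n : ℕ) (f P Q : PowerSeries ℚ) :
    Cp n f (P + Q) = Cp n f P + Cp n f Q := by
  rw [Cp, Cp, Cp, map_add, Polynomial.eval₂_add]

lemma Cp_zero (n : ℕ) (f : PowerSeries ℚ) : Cp n f 0 = 0 := by
  rw [Cp, map_zero, Polynomial.eval₂_zero]

lemma Cp_neg (n : ℕ) (f P : PowerSeries ℚ) : Cp n f (-P) = -Cp n f P := by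
  have h := Cp_add n f (-P) P
  rw [neg_add_cancel, Cp_zero] at h
  exact eq_neg_of_add_eq_zero_left h.symm

/-- Key multiplicativity modulo `X^(n+1)`. -/
lemma Cp_mul_dvd (n : ℕ) (f P Q : PowerSeries ℚ) (hXf : (X : PowerSeries ℚ) ∣ f) :
    (X : PowerSeries ℚ) ^ (n + 1) ∣ Cp n f (P * Q) - Cp n f P * Cp n f Q := by
  set N := n + 2 with hN
  set d : Polynomial ℚ := trunc N (P * Q) - trunc N P * trunc N Q with hd
  have hdvd : (Polynomial.X : Polynomial ℚ) ^ N ∣ d := by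
    rw [Polynomial.X_pow_dvd_iff]
    intro i hi
    have h1 : (coeff i) ((trunc N (P*Q) : Polynomial ℚ) : PowerSeries ℚ) = coeff i (P * Q) :=
      coeff_coe_trunc_of_lt hi
    have h2 : coeff i (P * Q) =
        coeff i ((trunc N P : Polynomial ℚ) * (trunc N Q : Polynomial ℚ) : PowerSeries ℚ) :=
      coeff_mul_eq_coeff_trunc_mul_trunc P Q hi
    have : d.coeff i = (coeff i) ((d : Polynomial ℚ) : PowerSeries ℚ) :=
      (Polynomial.coeff_coe _ _).symm
    rw [this, hd]
    push_cast [Polynomial.coe_sub, Polynomial.coe_mul]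
    rw [map_sub]
    rw [h1, h2]
    ring
  obtain ⟨e, he⟩ := hdvd
  have : Cp n f (P * Q) - Cp n f P * Cp n f Q = Polynomial.eval₂ ((PowerSeries.C (R := ℚ))) f d := by
    rw [hd, Polynomial.eval₂_sub, Polynomial.eval₂_mul]
    rfl
  rw [this, he, Polynomial.eval₂_mul, Polynomial.eval₂_pow, Polynomial.eval₂_X]
  exact Dvd.dvd.mul_right (dvd_trans (pow_dvd_pow X (by omega)) (pow_dvd_pow_of_dvd hXf N)) _

end RiordanAux

/-- For the elliptic curve `y² - 3xy - y = x³ - 2x² - 2x` (parameters `(a,b,c) = (3,2,2)`,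
so `a - 2c = -1` and `ac - b - c² = 0`), let `γ(x) = (1/(1+x))·C(-x³/(1+x)²)`.  The
Riordan array `(γ(x), -xγ(x))`, as the lower triangular matrix with `(n,k)` entry
`[xⁿ] γ·(-xγ)ᵏ`, is a pseudo-involution: its square is the identity matrix.

Here `w = C(A)` with `A = -x³/(1+x)²` is characterized by `2A·w = 1 - sA` and `w(0) = 1`,
where `sA` is the formal square root of `1 - 4A` with constant term `1`. -/
theorem riordan_pseudo_involution (sA w γ : PowerSeries ℚ)
    (hsA : sA ^ 2 = 1 - 4 * (-X ^ 3 * ((1 + X) ^ 2)⁻¹))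
    (hsA0 : constantCoeff sA = 1)
    (hw : 2 * (-X ^ 3 * ((1 + X) ^ 2)⁻¹) * w = 1 - sA)
    (hw0 : constantCoeff w = 1)
    (hγ : γ = (1 + X)⁻¹ * w)
    (M : ℕ → ℕ → ℚ)
    (hM : ∀ n k : ℕ, M n k = coeff n (γ * (-(X * γ)) ^ k)) :
    ∀ n k : ℕ, (∑ j ∈ Finset.range (n + 1), M n j * M j k) = if n = k then 1 else 0 := by
  classical
  open RiordanAux in
  -- Step A: the functional equation (1+X)γ + X³γ² = 1
  have hinv1 : ((1 : ℚ⟦X⟧) + X) * (1 + X)⁻¹ = 1 :=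
    PowerSeries.mul_inv_cancel _ (by simp)
  have hinv2 : (((1 : ℚ⟦X⟧) + X) ^ 2) * ((1 + X) ^ 2)⁻¹ = 1 :=
    PowerSeries.mul_inv_cancel _ (by simp)
  have hAX : (-X ^ 3 * ((1 + X) ^ 2)⁻¹) * ((1 + X) ^ 2) = -(X : ℚ⟦X⟧) ^ 3 := by
    linear_combination (-(X : ℚ⟦X⟧) ^ 3) * hinv2
  have hX3 : ((X : ℚ⟦X⟧)) ^ 3 ≠ 0 := pow_ne_zero 3 PowerSeries.X_ne_zero
  have hAne : (-X ^ 3 * ((1 + X) ^ 2)⁻¹ : ℚ⟦X⟧) ≠ 0 := by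
    intro h
    rw [h, zero_mul] at hAX
    exact hX3 (neg_eq_zero.mp hAX.symm)
  have hsA' : sA = 1 - 2 * (-X ^ 3 * ((1 + X) ^ 2)⁻¹) * w := by linear_combination hw
  have h2 : (1 - 2 * (-X ^ 3 * ((1 + X) ^ 2)⁻¹) * w) ^ 2
      = 1 - 4 * (-X ^ 3 * ((1 + X) ^ 2)⁻¹) := by rw [← hsA']; exact hsA
  have hq4 : (4 : ℚ⟦X⟧) * (-X ^ 3 * ((1 + X) ^ 2)⁻¹) *
      ((-X ^ 3 * ((1 + X) ^ 2)⁻¹) * w ^ 2 - w + 1) = 0 := by linear_combination h2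
  have hwq : (-X ^ 3 * ((1 + X) ^ 2)⁻¹) * w ^ 2 - w + 1 = 0 := by
    rcases mul_eq_zero.mp hq4 with h | h
    · rcases mul_eq_zero.mp h with h' | h'
      · refine absurd (congrArg (constantCoeff) h') ?_
        simp only [map_ofNat, map_zero]
        norm_num
      · exact absurd h' hAne
    · exact h
  have hwγ : w = (1 + X) * γ := by
    rw [hγ]; linear_combination (-w) * hinv1
  have h3 : (-X ^ 3 * ((1 + X) ^ 2)⁻¹) * ((1 + X) * γ) ^ 2 - (1 + X) * γ + 1 = 0 := by
    rw [← hwγ]; exact hwq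
  have hE : (1 + X) * γ + X ^ 3 * γ ^ 2 = 1 := by
    linear_combination -h3 + γ ^ 2 * hAX
  have hγ0 : constantCoeff γ = 1 := by
    rw [hγ, map_mul, hw0, mul_one, PowerSeries.constantCoeff_inv]
    simp
  have hγinv : γ * γ⁻¹ = 1 :=
    PowerSeries.mul_inv_cancel _ (by rw [hγ0]; norm_num)
  -- Step B
  set f : ℚ⟦X⟧ := -(X * γ) with hfdef
  have hXf : (X : ℚ⟦X⟧) ∣ f := ⟨-γ, by rw [hfdef]; ring⟩
  have hf0 : constantCoeff f = 0 := by rw [hfdef]; simp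
  intro n k
  set Iq : Ideal ℚ⟦X⟧ := Ideal.span {(X : ℚ⟦X⟧) ^ (n + 1)} with hIq
  set π := Ideal.Quotient.mk Iq with hπ
  have πeq : ∀ a b : ℚ⟦X⟧, (X : ℚ⟦X⟧) ^ (n + 1) ∣ a - b → π a = π b := by
    intro a b h
    exact Ideal.Quotient.eq.mpr (Ideal.mem_span_singleton.mpr h)
  have qmul : ∀ P Q : ℚ⟦X⟧, π (Cp n f (P * Q)) = π (Cp n f P) * π (Cp n f Q) := by
    intro P Q
    rw [← map_mul]
    exact πeq _ _ (Cp_mul_dvd n f P Q hXf)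
  have qpow : ∀ (P : ℚ⟦X⟧) (m : ℕ), π (Cp n f (P ^ m)) = π (Cp n f P) ^ m := by
    intro P m
    induction m with
    | zero => rw [pow_zero, pow_zero, Cp_one, map_one]
    | succ m ih => rw [pow_succ, pow_succ, qmul, ih]
  -- the quadratic equation satisfied by H := π (Cp n f γ)
  have eA : π (Cp n f ((1 + X) * γ)) = (1 + π f) * π (Cp n f γ) := by
    rw [qmul, Cp_add, Cp_one, Cp_X, map_add, map_one]
  have eB : π (Cp n f (X ^ 3 * γ ^ 2)) = π f ^ 3 * π (Cp n f γ) ^ 2 := by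
    rw [qmul, qpow, qpow, Cp_X]
  have e1 : (1 + π f) * π (Cp n f γ) + π f ^ 3 * π (Cp n f γ) ^ 2 = 1 := by
    rw [← eA, ← eB, ← map_add, ← Cp_add, hE, Cp_one, map_one]
  -- γ⁻¹ satisfies the same quadratic
  have hstep : (1 + f) * γ + f ^ 3 = γ ^ 2 := by
    rw [hfdef]; linear_combination (-γ) * hE
  have e2 : (1 + f) * γ⁻¹ + f ^ 3 * (γ⁻¹) ^ 2 = 1 := by
    linear_combination (γ⁻¹) ^ 2 * hstep + (1 + γ * γ⁻¹ - (1 + f) * γ⁻¹) * hγinv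
  have e2q : (1 + π f) * π γ⁻¹ + π f ^ 3 * π γ⁻¹ ^ 2 = 1 := by
    have := congrArg π e2
    push_cast [map_add, map_mul, map_pow, map_one] at this
    exact this
  -- uniqueness: H = π γ⁻¹
  have hu : IsUnit (f ^ 3 * (Cp n f γ + γ⁻¹) + 1 + f) := by
    rw [PowerSeries.isUnit_iff_constantCoeff]
    simp [hf0]
  have hz : (π (Cp n f γ) - π γ⁻¹) *
      π (f ^ 3 * (Cp n f γ + γ⁻¹) + 1 + f) = 0 := by
    push_cast [map_add, map_mul, map_pow, map_one]
    linear_combination e1 - e2q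
  have hH : π (Cp n f γ) = π γ⁻¹ := by
    obtain ⟨v, hv⟩ := (hu.map π).exists_right_inv
    have : (π (Cp n f γ) - π γ⁻¹) = (π (Cp n f γ) - π γ⁻¹) *
        (π (f ^ 3 * (Cp n f γ + γ⁻¹) + 1 + f) * v) := by rw [hv, mul_one]
    rw [← mul_assoc, hz, zero_mul] at this
    exact sub_eq_zero.mp this
  have hγq : π γ * π γ⁻¹ = 1 := by
    rw [← map_mul, hγinv, map_one]
  -- f ∘ f = X  (mod X^(n+1))
  have hFq : π f = -(π X * π γ) := by
    rw [hfdef, map_neg, map_mul]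
  have hCpf : π (Cp n f f) = π X := by
    have : π (Cp n f f) = -(π f * π γ⁻¹) := by
      rw [hfdef, Cp_neg, map_neg, qmul, Cp_X, hH]
    rw [this, hFq]
    linear_combination π X * hγq
  -- main identity: γ · Cp(γ f^k) ≡ X^k
  have hmain : π (γ * Cp n f (γ * f ^ k)) = π ((X : ℚ⟦X⟧) ^ k) := by
    rw [map_mul, qmul, hH, qpow, hCpf, map_pow]
    linear_combination (π X) ^ k * hγq
  -- extract coefficient n
  have hdvd : (X : ℚ⟦X⟧) ^ (n + 1) ∣ (γ * Cp n f (γ * f ^ k) - X ^ k) :=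
    Ideal.mem_span_singleton.mp (Ideal.Quotient.eq.mp hmain)
  have hco : coeff n (γ * Cp n f (γ * f ^ k)) = coeff n ((X : ℚ⟦X⟧) ^ k) := by
    have h := (PowerSeries.X_pow_dvd_iff.mp hdvd) n (lt_add_one n)
    rw [map_sub, sub_eq_zero] at h
    exact h
  -- expand the left-hand side as a sum
  have hexp : coeff n (γ * Cp n f (γ * f ^ k))
      = ∑ i ∈ Finset.range (n + 2), coeff i (γ * f ^ k) * coeff n (γ * f ^ i) := by
    rw [Cp_sum, Finset.mul_sum, map_sum]
    refine Finset.sum_congr rfl fun i _ => ?_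
    rw [mul_left_comm, PowerSeries.coeff_C_mul]
  have hlast : coeff n (γ * f ^ (n + 1)) = 0 := by
    have : (X : ℚ⟦X⟧) ^ (n + 1) ∣ γ * f ^ (n + 1) :=
      Dvd.dvd.mul_left (pow_dvd_pow_of_dvd hXf (n + 1)) γ
    exact (PowerSeries.X_pow_dvd_iff.mp this) n (lt_add_one n)
  have hsum : ∑ i ∈ Finset.range (n + 2), coeff i (γ * f ^ k) * coeff n (γ * f ^ i)
      = ∑ i ∈ Finset.range (n + 1), coeff i (γ * f ^ k) * coeff n (γ * f ^ i) := by
    rw [Finset.sum_range_succ, hlast, mul_zero, add_zero]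
  have hXk : coeff n ((X : ℚ⟦X⟧) ^ k) = if n = k then 1 else 0 :=
    PowerSeries.coeff_X_pow n k
  calc ∑ j ∈ Finset.range (n + 1), M n j * M j k
      = ∑ j ∈ Finset.range (n + 1), coeff j (γ * f ^ k) * coeff n (γ * f ^ j) := by
        refine Finset.sum_congr rfl fun j _ => ?_
        rw [hM n j, hM j k, mul_comm]
    _ = coeff n (γ * Cp n f (γ * f ^ k)) := by rw [hexp, hsum]
    _ = if n = k then 1 else 0 := by rw [hco, hXk]
end
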